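/- arXiv:1105.4858 — 8 statements merged into one kernel-verified Lean document; each statement's English description precedes it below -/
import Mathlib

section
/- Let g be a Lie algebra over a commutative ring and N : g → g a linear map. Define the deformed bracket [X,Y]_N = [NX,Y] + [X,NY] − N[X,Y] and the Nijenhuis torsion T_N(X,Y) = [NX,NY] − N[X,Y]_N. If T_N = 0, then [·,·]_N is a Lie bracket on g (bilinear, alternating, satisfying the Jacobi identity). -/
/-- The deformed bracket `[X,Y]_N = [NX,Y] + [X,NY] - N[X,Y]`. -/
def nijBracket {R g : Type*} [CommRing R] [LieRing g] [LieAlgebra R g]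
    (N : g →ₗ[R] g) (X Y : g) : g :=
  ⁅N X, Y⁆ + ⁅X, N Y⁆ - N ⁅X, Y⁆

/-- If the Nijenhuis torsion of `N` vanishes, the deformed bracket `[·,·]_N`
is a Lie bracket: bilinear, alternating and satisfying the Jacobi identity. -/
theorem deformed_bracket_is_lie {R g : Type*} [CommRing R] [LieRing g] [LieAlgebra R g]
    (N : g →ₗ[R] g)
    (hT : ∀ X Y : g, ⁅N X, N Y⁆ = N (nijBracket N X Y)) :
    (∀ X Y Z : g, nijBracket N (X + Y) Z = nijBracket N X Z + nijBracket N Y Z) ∧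
    (∀ X Y Z : g, nijBracket N X (Y + Z) = nijBracket N X Y + nijBracket N X Z) ∧
    (∀ (c : R) (X Y : g), nijBracket N (c • X) Y = c • nijBracket N X Y) ∧
    (∀ (c : R) (X Y : g), nijBracket N X (c • Y) = c • nijBracket N X Y) ∧
    (∀ X : g, nijBracket N X X = 0) ∧
    (∀ X Y Z : g, nijBracket N X (nijBracket N Y Z) =
      nijBracket N (nijBracket N X Y) Z + nijBracket N Y (nijBracket N X Z)) := by
  have hT2 : ∀ a b : g, ⁅N a, N b⁆ = N ⁅N a, b⁆ + N ⁅a, N b⁆ - N (N ⁅a, b⁆) := by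
    intro a b
    rw [hT a b]
    simp [nijBracket, map_add, map_sub]
  refine ⟨?_, ?_, ?_, ?_, ?_, ?_⟩
  · intro X Y Z
    simp only [nijBracket, add_lie, lie_add, map_add]
    abel
  · intro X Y Z
    simp only [nijBracket, add_lie, lie_add, map_add]
    abel
  · intro c X Y
    simp only [nijBracket, smul_lie, lie_smul, map_smul, smul_add, smul_sub]
  · intro c X Y
    simp only [nijBracket, smul_lie, lie_smul, map_smul, smul_add, smul_sub]
  · intro X
    rw [nijBracket, lie_self, map_zero, ← lie_skew]
    abel
  · intro X Y Z
    have key : ⁅N ⁅N X, Y⁆, Z⁆ =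
        ⁅N X, ⁅N Y, Z⁆⁆ - ⁅N Y, ⁅N X, Z⁆⁆ - ⁅N ⁅X, N Y⁆, Z⁆ + ⁅N (N ⁅X, Y⁆), Z⁆ := by
      have h : ⁅N ⁅N X, Y⁆ + N ⁅X, N Y⁆ - N (N ⁅X, Y⁆), Z⁆ = ⁅⁅N X, N Y⁆, Z⁆ := by
        rw [← hT2]
      rw [sub_lie, add_lie, lie_lie] at h
      have := h
      -- h : ⁅N ⁅N X, Y⁆, Z⁆ + ⁅N ⁅X, N Y⁆, Z⁆ - ⁅N (N ⁅X, Y⁆), Z⁆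
      --     = ⁅N X, ⁅N Y, Z⁆⁆ - ⁅N Y, ⁅N X, Z⁆⁆
      rw [sub_eq_iff_eq_add, add_comm, ← sub_eq_iff_eq_add'] at h
      rw [← h]
      abel
    simp only [nijBracket, lie_add, add_lie, lie_sub, sub_lie, map_add, map_sub,
      hT2, lie_lie, key]
    abel
end

section
/- Let g be a Lie algebra and N : g → g a linear map with vanishing Nijenhuis torsion T_N(X,Y) = [NX,NY] − N[NX,Y] − N[X,NY] + N^2[X,Y] = 0. Then for every positive integer l, the power N^l also has vanishing Nijenhuis torsion: [N^l X, N^l Y] − N^l[N^l X, Y] − N^l[X, N^l Y] + N^{2l}[X,Y] = 0 for all X,Y in g. -/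
/-- If `N` has vanishing Nijenhuis torsion, then so does every power `N^l`. -/
theorem power_has_vanishing_torsion {K g : Type*} [Field K] [LieRing g] [LieAlgebra K g]
    (N : g →ₗ[K] g)
    (hT : ∀ X Y : g, ⁅N X, N Y⁆ - N ⁅N X, Y⁆ - N ⁅X, N Y⁆ + (N ^ 2) ⁅X, Y⁆ = 0) :
    ∀ l : ℕ, 0 < l → ∀ X Y : g,
      ⁅(N ^ l) X, (N ^ l) Y⁆ - (N ^ l) ⁅(N ^ l) X, Y⁆ - (N ^ l) ⁅X, (N ^ l) Y⁆
        + (N ^ (2 * l)) ⁅X, Y⁆ = 0 := by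
  have hpow : ∀ (n : ℕ) (v : g), (N ^ (n + 1)) v = N ((N ^ n) v) := by
    intro n v
    rw [pow_succ']
    rfl
  have hcomm : ∀ (n : ℕ) (v : g), (N ^ n) (N v) = N ((N ^ n) v) := by
    intro n v
    rw [← Module.End.mul_apply, ← pow_succ, pow_succ', Module.End.mul_apply]
  have hT' : ∀ X Y : g, ⁅N X, N Y⁆ - N ⁅N X, Y⁆ - N ⁅X, N Y⁆ + N (N ⁅X, Y⁆) = 0 := by
    intro X Y
    have h := hT X Y
    rwa [show (2 : ℕ) = 1 + 1 from rfl, hpow, pow_one] at h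
  have hQ : ∀ k : ℕ, ∀ X Y : g,
      ⁅(N ^ (k + 1)) X, N Y⁆
        = N ⁅(N ^ (k + 1)) X, Y⁆ + (N ^ (k + 1)) ⁅X, N Y⁆ - N ((N ^ (k + 1)) ⁅X, Y⁆) := by
    intro k
    induction k with
    | zero =>
      intro X Y
      have h := hT' X Y
      simp only [zero_add, pow_one]
      linear_combination (norm := abel1) h
    | succ k ih =>
      intro X Y
      have h1 := hT' ((N ^ (k + 1)) X) Y
      have h2 := congrArg N (ih X Y)
      simp only [map_add, map_sub] at h2
      simp only [hpow, hcomm] at h1 h2 ⊢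
      linear_combination (norm := abel1) h1 + h2
  have hP : ∀ a b : ℕ, ∀ X Y : g,
      ⁅(N ^ (a + 1)) X, (N ^ (b + 1)) Y⁆
        = (N ^ (b + 1)) ⁅(N ^ (a + 1)) X, Y⁆ + (N ^ (a + 1)) ⁅X, (N ^ (b + 1)) Y⁆
          - (N ^ (a + 1)) ((N ^ (b + 1)) ⁅X, Y⁆) := by
    intro a b
    induction b with
    | zero =>
      intro X Y
      have h := hQ a X Y
      simp only [zero_add, pow_one] at h ⊢
      simp only [hpow, hcomm] at h ⊢
      linear_combination (norm := abel1) h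
    | succ b ih =>
      intro X Y
      have h1 := hQ a X ((N ^ (b + 1)) Y)
      have h2 := congrArg N (ih X Y)
      simp only [map_add, map_sub] at h2
      simp only [hpow, hcomm] at h1 h2 ⊢
      linear_combination (norm := abel1) h1 + h2
  intro l hl X Y
  obtain ⟨k, rfl⟩ : ∃ k, l = k + 1 := ⟨l - 1, by omega⟩
  have h := hP k k X Y
  rw [show 2 * (k + 1) = (k + 1) + (k + 1) from by ring]
  have hsplit : ∀ v : g, (N ^ (k + 1 + (k + 1))) v = (N ^ (k + 1)) ((N ^ (k + 1)) v) := by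
    intro v
    rw [pow_add, Module.End.mul_apply]
  rw [hsplit]
  simp only [hpow, hcomm] at h ⊢
  linear_combination (norm := abel1) h
end

section
/- Let g be a Lie algebra and N : g → g a linear map with vanishing Nijenhuis torsion. Then for all X, Y in g and every positive integer l, the identity −[N^{l−1}X, NY] + N[N^{l−1}X, Y] + N^{l−1}[X, NY] − N^l[X, Y] = 0 holds. -/
/-- For a torsion-free Nijenhuis operator `N`, the identity
`-[N^(l-1)X, NY] + N[N^(l-1)X, Y] + N^(l-1)[X, NY] - N^l[X,Y] = 0` holds. -/
theorem nijenhuis_power_identity {K g : Type*} [Field K] [LieRing g] [LieAlgebra K g]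
    (N : g →ₗ[K] g)
    (hT : ∀ X Y : g, ⁅N X, N Y⁆ - N ⁅N X, Y⁆ - N ⁅X, N Y⁆ + (N ^ 2) ⁅X, Y⁆ = 0) :
    ∀ l : ℕ, 0 < l → ∀ X Y : g,
      -⁅(N ^ (l - 1)) X, N Y⁆ + N ⁅(N ^ (l - 1)) X, Y⁆ + (N ^ (l - 1)) ⁅X, N Y⁆
        - (N ^ l) ⁅X, Y⁆ = 0 := by
  intro l hl
  induction l with
  | zero => omega
  | succ m ih =>
    intro X Y
    cases m with
    | zero => simp only [zero_add, Nat.sub_self, pow_zero, pow_one, Module.End.one_apply]; abel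
    | succ k =>
      have h1 := hT ((N ^ k) X) Y
      have h2 := congrArg N (ih (Nat.succ_pos k) X Y)
      simp only [Nat.add_sub_cancel, pow_succ', pow_zero, Module.End.one_apply,
        Module.End.mul_apply, map_add, map_sub, map_neg, map_zero] at h1 h2 ⊢
      linear_combination (norm := abel) h2 - h1
end

section
/- Let g be a Lie algebra and N : g → g a linear map with vanishing Nijenhuis torsion, and let k be a positive integer. If X and Y lie in ker N^k, then [X,Y] lies in ker N^{2k}. Consequently, if moreover ker N^{2k} = ker N^k, then ker N^k is a Lie subalgebra of g. -/
private lemma nij_pow_one {K g : Type*} [Field K] [LieRing g] [LieAlgebra K g]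
    (N : g →ₗ[K] g)
    (hT : ∀ X Y : g, ⁅N X, N Y⁆ = N (⁅N X, Y⁆ + ⁅X, N Y⁆ - N ⁅X, Y⁆)) :
    ∀ q (X Y : g), (N ^ (1 + q)) ⁅X, Y⁆ =
      N ⁅X, (N ^ q) Y⁆ + (N ^ q) ⁅N X, Y⁆ - ⁅N X, (N ^ q) Y⁆ := by
  have e : ∀ (m : ℕ) (z : g), (N ^ (m + 1)) z = (N ^ m) (N z) := fun m z => by
    rw [pow_succ]; rfl
  intro q
  induction q with
  | zero => intro X Y; simp
  | succ q ih =>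
    intro X Y
    have h1 : (N ^ q) ⁅N X, N Y⁆ =
        (N ^ q) (N ⁅N X, Y⁆) + (N ^ q) (N ⁅X, N Y⁆) - (N ^ q) (N (N ⁅X, Y⁆)) := by
      rw [hT X Y]; simp only [map_add, map_sub]
    have h2 := ih X (N Y)
    rw [show (1 : ℕ) + q = q + 1 from by omega, e] at h2
    have h1' : (N ^ q) (N (N ⁅X, Y⁆)) =
        (N ^ q) (N ⁅N X, Y⁆) + (N ^ q) (N ⁅X, N Y⁆) - (N ^ q) ⁅N X, N Y⁆ := by
      rw [h1]; abel
    rw [h2] at h1'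
    rw [show (1 : ℕ) + (q + 1) = (q + 1) + 1 from by omega]
    simp only [e]
    rw [h1']
    abel

private lemma nij_pow {K g : Type*} [Field K] [LieRing g] [LieAlgebra K g]
    (N : g →ₗ[K] g)
    (hT : ∀ X Y : g, ⁅N X, N Y⁆ = N (⁅N X, Y⁆ + ⁅X, N Y⁆ - N ⁅X, Y⁆)) :
    ∀ p q (X Y : g), (N ^ (p + q)) ⁅X, Y⁆ =
      (N ^ p) ⁅X, (N ^ q) Y⁆ + (N ^ q) ⁅(N ^ p) X, Y⁆ - ⁅(N ^ p) X, (N ^ q) Y⁆ := by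
  have e : ∀ (m : ℕ) (z : g), (N ^ (m + 1)) z = (N ^ m) (N z) := fun m z => by
    rw [pow_succ]; rfl
  intro p
  induction p with
  | zero => intro q X Y; simp
  | succ p ih =>
    intro q X Y
    have hA := ih q (N X) Y
    have hB := nij_pow_one N hT q X Y
    have hA' : (N ^ p) ((N ^ q) ⁅N X, Y⁆) =
        (N ^ p) ⁅N X, (N ^ q) Y⁆ + (N ^ q) ⁅(N ^ p) (N X), Y⁆
          - ⁅(N ^ p) (N X), (N ^ q) Y⁆ := by
      rw [← Module.End.mul_apply, ← pow_add]; exact hA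
    rw [show (p + 1) + q = p + (1 + q) from by omega, pow_add, Module.End.mul_apply,
      hB, map_sub, map_add, hA']
    simp only [e]
    abel

/-- For a torsion-free Nijenhuis operator `N`, the bracket of two elements of
`ker N^k` lies in `ker N^(2k)`; hence if `ker N^(2k) = ker N^k`, then
`ker N^k` is a Lie subalgebra. -/
theorem ker_power_subalgebra {K g : Type*} [Field K] [LieRing g] [LieAlgebra K g]
    (N : g →ₗ[K] g)
    (hT : ∀ X Y : g, ⁅N X, N Y⁆ = N (⁅N X, Y⁆ + ⁅X, N Y⁆ - N ⁅X, Y⁆))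
    (k : ℕ) (hk : 0 < k) :
    (∀ X Y : g, (N ^ k) X = 0 → (N ^ k) Y = 0 → (N ^ (2 * k)) ⁅X, Y⁆ = 0) ∧
    (LinearMap.ker (N ^ (2 * k)) = LinearMap.ker (N ^ k) →
      ∀ X Y : g, X ∈ LinearMap.ker (N ^ k) → Y ∈ LinearMap.ker (N ^ k) →
        ⁅X, Y⁆ ∈ LinearMap.ker (N ^ k)) := by
  have key : ∀ X Y : g, (N ^ k) X = 0 → (N ^ k) Y = 0 → (N ^ (2 * k)) ⁅X, Y⁆ = 0 := by
    intro X Y hX hY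
    have := nij_pow N hT k k X Y
    rw [hX, hY] at this
    rw [two_mul, this]
    simp
  refine ⟨key, fun h X Y hX hY => ?_⟩
  rw [LinearMap.mem_ker] at hX hY
  rw [← h, LinearMap.mem_ker]
  exact key X Y hX hY
end

section
/- Let g be a Lie algebra and N : g → g a linear map with vanishing Nijenhuis torsion. Then for every positive integer k, the image im N^k is a Lie subalgebra of g, i.e. [N^k X, N^k Y] lies in im N^k for all X, Y in g. -/
/-- For a torsion-free Nijenhuis operator `N`, the image of every power `N^k`
is a Lie subalgebra: `[N^k X, N^k Y] ∈ im N^k`. -/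
theorem range_power_subalgebra {K g : Type*} [Field K] [LieRing g] [LieAlgebra K g]
    (N : g →ₗ[K] g)
    (hT : ∀ X Y : g, ⁅N X, N Y⁆ - N ⁅N X, Y⁆ - N ⁅X, N Y⁆ + (N ^ 2) ⁅X, Y⁆ = 0) :
    ∀ k : ℕ, 0 < k → ∀ X Y : g,
      ⁅(N ^ k) X, (N ^ k) Y⁆ ∈ LinearMap.range (N ^ k) := by
  have hpow : ∀ (k : ℕ) (z : g), (N ^ (k + 1)) z = N ((N ^ k) z) := by
    intro k z; rw [pow_succ']; rfl
  have hpow' : ∀ (k : ℕ) (z : g), (N ^ (k + 1)) z = (N ^ k) (N z) := by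
    intro k z; rw [pow_succ]; rfl
  have hpowadd : ∀ (a b : ℕ) (z : g), (N ^ (a + b)) z = (N ^ b) ((N ^ a) z) := by
    intro a b z; rw [add_comm, pow_add]; rfl
  have hsq : ∀ z : g, (N ^ 2) z = N (N z) := by
    intro z; simpa using hpow 1 z
  have hT' : ∀ X Y : g, ⁅N X, N Y⁆ = N ⁅N X, Y⁆ + N ⁅X, N Y⁆ - N (N ⁅X, Y⁆) := by
    intro X Y
    have h := hT X Y
    rw [hsq] at h
    rw [← sub_eq_zero, ← h]
    abel
  -- Hierarchy identity, level 1 in the second slot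
  have P : ∀ (k : ℕ) (X Y : g),
      ⁅(N ^ k) X, N Y⁆ = N ⁅(N ^ k) X, Y⁆ + (N ^ k) ⁅X, N Y⁆ - (N ^ (k + 1)) ⁅X, Y⁆ := by
    intro k
    induction k with
    | zero => intro X Y; simp
    | succ k ih =>
      intro X Y
      have h2 : N ⁅(N ^ k) X, N Y⁆
          = N (N ⁅(N ^ k) X, Y⁆) + N ((N ^ k) ⁅X, N Y⁆) - N ((N ^ (k + 1)) ⁅X, Y⁆) := by
        rw [ih X Y, map_sub, map_add]
      calc ⁅(N ^ (k + 1)) X, N Y⁆ = ⁅N ((N ^ k) X), N Y⁆ := by rw [hpow]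
        _ = N ⁅N ((N ^ k) X), Y⁆ + N ⁅(N ^ k) X, N Y⁆ - N (N ⁅(N ^ k) X, Y⁆) :=
            hT' ((N ^ k) X) Y
        _ = N ⁅N ((N ^ k) X), Y⁆ + N ((N ^ k) ⁅X, N Y⁆) - N ((N ^ (k + 1)) ⁅X, Y⁆) := by
            rw [h2]; abel
        _ = N ⁅(N ^ (k + 1)) X, Y⁆ + (N ^ (k + 1)) ⁅X, N Y⁆ - (N ^ (k + 2)) ⁅X, Y⁆ := by
            rw [hpow k X, hpow k ⁅X, N Y⁆, hpow (k + 1) ⁅X, Y⁆]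
  -- General hierarchy identity
  have Q : ∀ (j k : ℕ) (X Y : g),
      ⁅(N ^ k) X, (N ^ j) Y⁆
        = (N ^ j) ⁅(N ^ k) X, Y⁆ + (N ^ k) ⁅X, (N ^ j) Y⁆ - (N ^ (k + j)) ⁅X, Y⁆ := by
    intro j
    induction j with
    | zero => intro k X Y; simp
    | succ j ih =>
      intro k X Y
      have h3 : (N ^ j) ⁅(N ^ k) X, N Y⁆
          = (N ^ (j + 1)) ⁅(N ^ k) X, Y⁆ + (N ^ j) ((N ^ k) ⁅X, N Y⁆)
            - (N ^ (k + 1 + j)) ⁅X, Y⁆ := by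
        rw [P k X Y, map_sub, map_add, ← hpow' j, ← hpowadd (k + 1) j]
      calc ⁅(N ^ k) X, (N ^ (j + 1)) Y⁆ = ⁅(N ^ k) X, (N ^ j) (N Y)⁆ := by rw [hpow']
        _ = (N ^ j) ⁅(N ^ k) X, N Y⁆ + (N ^ k) ⁅X, (N ^ j) (N Y)⁆
            - (N ^ (k + j)) ⁅X, N Y⁆ := ih k X (N Y)
        _ = (N ^ (j + 1)) ⁅(N ^ k) X, Y⁆ + (N ^ k) ⁅X, (N ^ (j + 1)) Y⁆
            - (N ^ (k + (j + 1))) ⁅X, Y⁆ := by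
            rw [h3, ← hpow' j Y, hpowadd k j ⁅X, N Y⁆,
              show k + 1 + j = k + (j + 1) from by ring]
            abel
  intro k _ X Y
  refine ⟨⁅(N ^ k) X, Y⁆ + ⁅X, (N ^ k) Y⁆ - (N ^ k) ⁅X, Y⁆, ?_⟩
  rw [map_sub, map_add, Q k k X Y, hpowadd k k]
end

section
/- Let g = h1 ⋉ h2 be a semidirect product Lie algebra with h1 a subalgebra, let P : g → h1 be the projection onto the first factor, let μ ∈ g*, and let Ω_μ be the form on g × g* given by Ω_μ((ξ,π),(ξ',π')) = π'(ξ) − π(ξ') + μ([ξ,ξ']). Then the subspace W = h1 × P*(h1*) of g × g* is a symplectic subspace, i.e. the restriction of Ω_μ to W is nondegenerate. -/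
/-- The 2-form `Ω_μ((ξ,π),(ξ',π')) = π'(ξ) − π(ξ') + μ([ξ,ξ'])` on `g × g*`. -/
def omegaMu {K g : Type*} [Field K] [LieRing g] [LieAlgebra K g] (μ : Module.Dual K g)
    (v w : g × Module.Dual K g) : K :=
  w.2 v.1 - v.2 w.1 + μ ⁅v.1, w.1⁆

/-- For a semidirect product `g = h1 ⋉ h2` (where `h1` is realized as the range
of the idempotent projection `P` and is a subalgebra), the subspace
`W = h1 × P*(h1*)` of `g × g*` is symplectic: `Ω_μ` restricted to it is
nondegenerate. -/
theorem omegaMu_nondeg_on_W {K g : Type*} [Field K] [LieRing g] [LieAlgebra K g]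
    [FiniteDimensional K g]
    (P : g →ₗ[K] g) (hP : P ∘ₗ P = P)
    (hsub : ∀ ξ η : g, P ξ = ξ → P η = η → P ⁅ξ, η⁆ = ⁅ξ, η⁆)
    (μ : Module.Dual K g) :
    ∀ v : g × Module.Dual K g,
      (P v.1 = v.1 ∧ ∃ α : Module.Dual K g, v.2 = α ∘ₗ P) →
      (∀ w : g × Module.Dual K g,
        (P w.1 = w.1 ∧ ∃ β : Module.Dual K g, w.2 = β ∘ₗ P) → omegaMu μ v w = 0) →
      v = 0 := by
  rintro ⟨ξ, π⟩ ⟨hξ, α, hπ⟩ h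
  -- First, ξ = 0: test against w = (0, β ∘ P) for arbitrary β.
  have hξ0 : ξ = 0 := by
    rw [← Module.forall_dual_apply_eq_zero_iff K]
    intro β
    have := h (0, β ∘ₗ P) ⟨by simp, β, rfl⟩
    simpa [omegaMu, hξ] using this
  subst hξ0
  have hπ' : π = α ∘ₗ P := hπ
  have hπ0 : π = 0 := by
    ext x
    have hPPx : P (P x) = P x := by simpa using congrArg (· x) hP
    have h2 := h (P x, 0) ⟨hPPx, 0, by ext y; simp⟩
    simp only [omegaMu, LinearMap.zero_apply, zero_sub, zero_lie, map_zero, add_zero,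
      neg_eq_zero] at h2
    show π x = 0
    have hx : π x = π (P x) := by rw [hπ']; simp only [LinearMap.comp_apply, hPPx]
    rw [hx]; exact h2
  simp [Prod.ext_iff, hπ0]
end

section
/- On R^{2n} with coordinates (q^1,…,q^n,p_1,…,p_n), let Λ0 be the canonical Poisson bivector, H1 = (1/2)Σ_{i=1}^n p_i^2 + Σ_{i=1}^{n−1} e^{q^i − q^{i+1}}, and H0 = Σ_{i=1}^n p_i. Let Λ1 = −Σ_{i<j} ∂/∂q^i ∧ ∂/∂q^j + Σ_i p_i ∂/∂q^i ∧ ∂/∂p_i + Σ_{i=1}^{n−1} e^{q^i−q^{i+1}} ∂/∂p_{i+1} ∧ ∂/∂p_i. Then the Hamiltonian vector field of H1 with respect to Λ0 equals the Hamiltonian vector field of H0 with respect to Λ1: Λ0♯(dH1) = Λ1♯(dH0). -/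
open Finset

/-- The Toda Hamiltonian `H1 = (1/2) Σ p_i² + Σ exp(qⁱ − qⁱ⁺¹)` (1-indexed). -/
noncomputable def todaH1 (n : ℕ) (q p : ℕ → ℝ) : ℝ :=
  (1 / 2) * ∑ i ∈ Icc 1 n, (p i) ^ 2 + ∑ i ∈ Icc 1 (n - 1), Real.exp (q i - q (i + 1))

/-- The Hamiltonian `H0 = Σ p_i`. -/
def todaH0 (n : ℕ) (_q p : ℕ → ℝ) : ℝ :=
  ∑ i ∈ Icc 1 n, p i

/-- Partial derivative of `H` with respect to the coordinate `qⁱ`. -/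
noncomputable def todaDq (H : (ℕ → ℝ) → (ℕ → ℝ) → ℝ) (q p : ℕ → ℝ) (i : ℕ) : ℝ :=
  deriv (fun t => H (Function.update q i t) p) (q i)

/-- Partial derivative of `H` with respect to the coordinate `p_i`. -/
noncomputable def todaDp (H : (ℕ → ℝ) → (ℕ → ℝ) → ℝ) (q p : ℕ → ℝ) (i : ℕ) : ℝ :=
  deriv (fun t => H q (Function.update p i t)) (p i)

lemma dqH0 (n : ℕ) (q p : ℕ → ℝ) (i : ℕ) : todaDq (todaH0 n) q p i = 0 := by
  simp [todaDq, todaH0]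

lemma dpH0 (n : ℕ) (q p : ℕ → ℝ) {i : ℕ} (hi : i ∈ Icc 1 n) :
    todaDp (todaH0 n) q p i = 1 := by
  have h : HasDerivAt (fun t => todaH0 n q (Function.update p i t))
      (∑ k ∈ Icc 1 n, if k = i then (1:ℝ) else 0) (p i) := by
    unfold todaH0
    apply HasDerivAt.fun_sum
    intro k _
    by_cases hk : k = i
    · subst hk
      simp only [Function.update_self, if_pos rfl]
      exact hasDerivAt_id _
    · simp only [Function.update_of_ne hk, if_neg hk]
      exact hasDerivAt_const _ _
  have := h.deriv
  rw [todaDp, this, Finset.sum_ite_eq' (Icc 1 n) i (fun _ => (1:ℝ)), if_pos hi]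

lemma dpH1 (n : ℕ) (q p : ℕ → ℝ) {i : ℕ} (hi : i ∈ Icc 1 n) :
    todaDp (todaH1 n) q p i = p i := by
  have h : HasDerivAt (fun t => todaH1 n q (Function.update p i t))
      ((1/2) * ∑ k ∈ Icc 1 n, (if k = i then 2 * p i else 0)) (p i) := by
    unfold todaH1
    apply HasDerivAt.add_const
    apply HasDerivAt.const_mul
    apply HasDerivAt.fun_sum
    intro k _
    by_cases hk : k = i
    · subst hk
      simp only [Function.update_self, if_pos rfl]
      simpa using hasDerivAt_pow 2 (p k)
    · simp only [Function.update_of_ne hk, if_neg hk]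
      exact hasDerivAt_const _ _
  have := h.deriv
  rw [todaDp, this, Finset.sum_ite_eq' (Icc 1 n) i (fun _ => 2 * p i), if_pos hi]
  ring

lemma dqH1 (n : ℕ) (q p : ℕ → ℝ) (i : ℕ) :
    todaDq (todaH1 n) q p i =
      ∑ k ∈ Icc 1 (n-1),
        ((if k = i then Real.exp (q i - q (i+1)) else 0)
          - (if k + 1 = i then Real.exp (q k - q i) else 0)) := by
  have h : HasDerivAt (fun t => todaH1 n (Function.update q i t) p)
      (∑ k ∈ Icc 1 (n-1),
        ((if k = i then Real.exp (q i - q (i+1)) else 0)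
          - (if k + 1 = i then Real.exp (q k - q i) else 0))) (q i) := by
    unfold todaH1
    apply HasDerivAt.const_add
    apply HasDerivAt.fun_sum
    intro k _
    by_cases hk : k = i
    · subst hk
      have hk1 : k + 1 ≠ k := by omega
      simp only [Function.update_self, Function.update_of_ne hk1, if_pos rfl,
        if_neg (by omega : ¬ k + 1 = k), sub_zero]
      have := ((hasDerivAt_id (q k)).sub_const (q (k+1))).exp
      simpa using this
    · by_cases hk1 : k + 1 = i
      · subst hk1
        simp only [Function.update_of_ne hk, Function.update_self,
          if_neg hk, if_pos rfl, zero_sub]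
        have := ((hasDerivAt_const (q (k+1)) (q k)).sub (hasDerivAt_id (q (k+1)))).exp
        simpa using this
      · simp only [Function.update_of_ne hk, Function.update_of_ne hk1,
          if_neg hk, if_neg hk1, sub_zero]
        exact hasDerivAt_const _ _
  rw [todaDq, h.deriv]

/-- The Toda system is bi-Hamiltonian: `Λ0♯(dH1) = Λ1♯(dH0)`, written out
componentwise (q-components and p-components) via the coefficient matrices of
the bivectors `Λ0 = Σ ∂qⁱ∧∂p_i` and
`Λ1 = −Σ_{i<j} ∂qⁱ∧∂qʲ + Σ p_i ∂qⁱ∧∂p_i + Σ e^{qⁱ−qⁱ⁺¹} ∂p_{i+1}∧∂p_i`. -/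
theorem toda_biHamiltonian (n : ℕ) (q p : ℕ → ℝ) :
    (∀ j ∈ Icc 1 n,
      (∑ i ∈ Icc 1 n,
        ((0 : ℝ) * todaDq (todaH1 n) q p i
          + (if i = j then (1 : ℝ) else 0) * todaDp (todaH1 n) q p i))
      = ∑ i ∈ Icc 1 n,
        (((if i < j then (1 : ℝ) else 0) - (if j < i then 1 else 0)) * todaDq (todaH0 n) q p i
          + (if i = j then p j else 0) * todaDp (todaH0 n) q p i)) ∧
    (∀ j ∈ Icc 1 n,
      (∑ i ∈ Icc 1 n,
        ((if i = j then (-1 : ℝ) else 0) * todaDq (todaH1 n) q p i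
          + (0 : ℝ) * todaDp (todaH1 n) q p i))
      = ∑ i ∈ Icc 1 n,
        ((if i = j then -(p j) else 0) * todaDq (todaH0 n) q p i
          + ((if j = i + 1 then Real.exp (q i - q (i + 1)) else 0)
              - (if i = j + 1 then Real.exp (q j - q (j + 1)) else 0))
            * todaDp (todaH0 n) q p i)) := by
  constructor
  · intro j hj
    trans (p j)
    · rw [Finset.sum_congr rfl (g := fun i => if i = j then p j else 0) ?_]
      · rw [Finset.sum_ite_eq' (Icc 1 n) j (fun _ => p j), if_pos hj]
      · intro i hi
        by_cases h : i = j
        · subst h; simp [dpH1 n q p hi]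
        · simp [h]
    · symm
      rw [Finset.sum_congr rfl (g := fun i => if i = j then p j else 0) ?_]
      · rw [Finset.sum_ite_eq' (Icc 1 n) j (fun _ => p j), if_pos hj]
      · intro i hi
        by_cases h : i = j
        · subst h; simp [dqH0, dpH0 n q p hi]
        · simp [h, dqH0]
  · intro j hj
    obtain ⟨hj1, hj2⟩ := Finset.mem_Icc.mp hj
    have hLHS : (∑ i ∈ Icc 1 n,
        ((if i = j then (-1 : ℝ) else 0) * todaDq (todaH1 n) q p i
          + (0 : ℝ) * todaDp (todaH1 n) q p i))
        = -(todaDq (todaH1 n) q p j) := by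
      rw [Finset.sum_congr rfl
        (g := fun i => if i = j then -(todaDq (todaH1 n) q p i) else 0) ?_]
      · rw [Finset.sum_ite_eq' (Icc 1 n) j
          (fun i => -(todaDq (todaH1 n) q p i)), if_pos hj]
      · intro i _
        by_cases h : i = j <;> simp [h]
    rw [hLHS, dqH1]
    have hRHS : (∑ i ∈ Icc 1 n,
        ((if i = j then -(p j) else 0) * todaDq (todaH0 n) q p i
          + ((if j = i + 1 then Real.exp (q i - q (i + 1)) else 0)
              - (if i = j + 1 then Real.exp (q j - q (j + 1)) else 0))
            * todaDp (todaH0 n) q p i))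
        = ∑ i ∈ Icc 1 n,
            ((if i = j - 1 then Real.exp (q i - q (i + 1)) else 0)
              - (if i = j + 1 then Real.exp (q j - q (j + 1)) else 0)) := by
      apply Finset.sum_congr rfl
      intro i hi
      rw [dqH0, dpH0 n q p hi, mul_zero, zero_add, mul_one]
      congr 1
      apply if_congr _ rfl rfl
      omega
    rw [hRHS, Finset.sum_sub_distrib, Finset.sum_sub_distrib,
      Finset.sum_ite_eq' (Icc 1 n) (j-1) (fun i => Real.exp (q i - q (i+1))),
      Finset.sum_ite_eq' (Icc 1 n) (j+1) (fun _ => Real.exp (q j - q (j+1))),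
      Finset.sum_ite_eq' (Icc 1 (n-1)) j (fun _ => Real.exp (q j - q (j+1)))]
    have hsum : (∑ k ∈ Icc 1 (n-1), if k + 1 = j then Real.exp (q k - q j) else 0)
        = if j - 1 ∈ Icc 1 (n-1) then Real.exp (q (j-1) - q j) else 0 := by
      rw [Finset.sum_congr rfl
        (g := fun k => if k = j - 1 then Real.exp (q k - q j) else 0) ?_]
      · rw [Finset.sum_ite_eq' (Icc 1 (n-1)) (j-1) (fun k => Real.exp (q k - q j))]
      · intro k _
        apply if_congr _ rfl rfl
        omega
    rw [hsum, show j - 1 + 1 = j from by omega]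
    simp only [Finset.mem_Icc]
    split_ifs <;> first | (exfalso; omega) | ring1
end

section
/- On (R^+)^{n−1} × R^n (n ≥ 2) with the bivectors Λ̄0 = Σ_{i=1}^{n−1} a_i ∂/∂a_i ∧ (∂/∂b_i − ∂/∂b_{i+1}) and Λ̄1 = Σ_{i=1}^{n−1} a_i ∂/∂a_i ∧ (b_i ∂/∂b_i − b_{i+1} ∂/∂b_{i+1}) + Σ_{i=1}^{n−1} a_i ∂/∂b_{i+1} ∧ ∂/∂b_i + Σ_{i=1}^{n−2} a_i a_{i+1} ∂/∂a_{i+1} ∧ ∂/∂a_i, there exists no (1,1)-tensor field N̄ on (R^+)^{n−1} × R^n such that Λ̄1♯ = N̄ ∘ Λ̄0♯. -/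
open Finset

/-! The covector `Σ db_i` lies in the kernel of `Λ̄0♯` at every point, whereas its image under
`Λ̄1♯` has `∂b_1`-component `-a_1 ≠ 0`; a pointwise linear `N̄` would have to send `0` to it. -/

/-- The sharp map of `Λ̄0 = Σ a_i ∂a_i ∧ (∂b_i − ∂b_{i+1})` on
`(ℝ⁺)^{n−1} × ℝⁿ`, applied to a covector `α = (α_a, α_b)`. -/
noncomputable def sharp0 (n : ℕ) (a : ℕ → ℝ) (α : (ℕ → ℝ) × (ℕ → ℝ)) :
    (ℕ → ℝ) × (ℕ → ℝ) :=
  (fun j => if j ∈ Icc 1 (n - 1) then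
      ∑ i ∈ Icc 1 n, ((if i = j then a j else 0) - (if i = j + 1 then a j else 0)) * α.2 i
    else 0,
   fun j => if j ∈ Icc 1 n then
      ∑ i ∈ Icc 1 (n - 1),
        (-((if j = i then a i else 0) - (if j = i + 1 then a i else 0))) * α.1 i
    else 0)

/-- The sharp map of
`Λ̄1 = Σ a_i ∂a_i ∧ (b_i ∂b_i − b_{i+1} ∂b_{i+1}) + Σ a_i ∂b_{i+1} ∧ ∂b_i
      + Σ a_i a_{i+1} ∂a_{i+1} ∧ ∂a_i`,
applied to a covector `α = (α_a, α_b)`. -/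
noncomputable def sharp1 (n : ℕ) (a b : ℕ → ℝ) (α : (ℕ → ℝ) × (ℕ → ℝ)) :
    (ℕ → ℝ) × (ℕ → ℝ) :=
  (fun j => if j ∈ Icc 1 (n - 1) then
      (∑ i ∈ Icc 1 (n - 1),
        ((if j = i + 1 then a i * a j else 0) - (if i = j + 1 then a j * a i else 0)) * α.1 i)
      + ∑ i ∈ Icc 1 n,
        ((if i = j then a j * b j else 0) - (if i = j + 1 then a j * b (j + 1) else 0)) * α.2 i
    else 0,
   fun j => if j ∈ Icc 1 n then
      (∑ i ∈ Icc 1 (n - 1),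
        (-((if j = i then a i * b i else 0) - (if j = i + 1 then a i * b (i + 1) else 0))) * α.1 i)
      + ∑ i ∈ Icc 1 n,
        ((if j = i + 1 then a i else 0) - (if i = j + 1 then a j else 0)) * α.2 i
    else 0)

lemma sharp0_sum_db (n : ℕ) (a : ℕ → ℝ) : sharp0 n a (0, 1) = 0 := by
  refine Prod.ext (funext fun j => ?_) (funext fun j => ?_)
  · simp only [sharp0, Prod.fst_zero, Pi.zero_apply, mem_Icc]
    split_ifs
    · simp only [Pi.one_apply, mul_one, sum_sub_distrib, sum_ite_eq']
      rw [if_pos (by simp; omega), if_pos (by simp; omega), sub_self]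
    · rfl
  · simp [sharp0]

lemma sharp1_sum_db_snd_one (n : ℕ) (hn : 2 ≤ n) (a b : ℕ → ℝ) :
    (sharp1 n a b (0, 1)).2 1 = -a 1 := by
  simp [sharp1, show 1 < n by omega, show 1 ≤ n by omega]

/-- There is no (1,1)-tensor field `N̄` on `(ℝ⁺)^{n−1} × ℝⁿ` relating the
reduced Toda Poisson bivectors by `Λ̄1♯ = N̄ ∘ Λ̄0♯`. -/
theorem no_recursion_operator (n : ℕ) (hn : 2 ≤ n) :
    ¬ ∃ Nbar : ((ℕ → ℝ) × (ℕ → ℝ)) → ((ℕ → ℝ) × (ℕ → ℝ)) →ₗ[ℝ] ((ℕ → ℝ) × (ℕ → ℝ)),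
      ∀ a b : ℕ → ℝ, (∀ i ∈ Icc 1 (n - 1), 0 < a i) →
        ∀ α : (ℕ → ℝ) × (ℕ → ℝ), sharp1 n a b α = Nbar (a, b) (sharp0 n a α) := by
  rintro ⟨N, hN⟩
  have h := hN 1 0 (fun _ _ => one_pos) (0, 1)
  rw [sharp0_sum_db, map_zero] at h
  have hb1 := congrArg (fun p => p.2 1) h
  simp [sharp1_sum_db_snd_one n hn] at hb1
end
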